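/- For a prime p > 3 and fixed a ∈ Z_p with a ≠ 0, the magic states |f_{a,b,c}⟩ = p^{-1/2} Σ_{k∈Z_p} ω^{ak³+bk²+ck}|k⟩ satisfy |⟨f_{a,b,c}|f_{a,b',c'}⟩| = 1 if (b,c)=(b',c'), equals 0 if b=b' and c≠c', and equals 1/√p if b ≠ b'. In particular, for each fixed b, {|f_{a,b,c}⟩ : c ∈ Z_p} is an orthonormal basis of C^p, and bases with different b are mutually unbiased. -/

import Mathlib

open Complex Matrix BigOperators Finset
open scoped Kronecker

noncomputable section

/-- Additive character `a ↦ exp(2πi a/p)` on `ZMod p`. -/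
def chi (p : ℕ) (a : ZMod p) : ℂ := Complex.exp (2 * Real.pi * Complex.I * (a.val : ℂ) / p)

/-- The shift operator `X : |j⟩ ↦ |j+1⟩`. -/
def Xop (p : ℕ) : Matrix (ZMod p) (ZMod p) ℂ := fun j k => if j = k + 1 then 1 else 0

/-- The clock operator `Z : |j⟩ ↦ ω^j |j⟩`. -/
def Zop (p : ℕ) : Matrix (ZMod p) (ZMod p) ℂ := Matrix.diagonal (fun j => chi p j)

/-- Weyl-Heisenberg displacement operator `D_(x|z) = ω^{2⁻¹ x z} X^x Z^z`. -/
def Dop (p : ℕ) [NeZero p] (x z : ZMod p) : Matrix (ZMod p) (ZMod p) ℂ :=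
  chi p ((2 : ZMod p)⁻¹ * x * z) • (Xop p ^ x.val * Zop p ^ z.val)

/-- The stabilizer MUB vector `|ψ_B^V⟩ = p^{-1/2} Σ_k ω^{2⁻¹ B k² - V k} |k⟩`. -/
def psi (p : ℕ) (B V : ZMod p) : ZMod p → ℂ :=
  fun k => ((Real.sqrt p : ℂ))⁻¹ * chi p ((2 : ZMod p)⁻¹ * B * k ^ 2 - V * k)

/-- The magic state `|f_{a,b,c}⟩ = p^{-1/2} Σ_k ω^{a k³ + b k² + c k} |k⟩`. -/
def magic (p : ℕ) (a b c : ZMod p) : ZMod p → ℂ :=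
  fun k => ((Real.sqrt p : ℂ))⁻¹ * chi p (a * k ^ 3 + b * k ^ 2 + c * k)

/-- Rank-one projector `|v⟩⟨v|`. -/
def proj (p : ℕ) (v : ZMod p → ℂ) : Matrix (ZMod p) (ZMod p) ℂ :=
  fun i j => v i * (starRingEnd ℂ) (v j)

/-- The single-qudit operator `S = Σ_B |ψ_B^{-B(B+2⁻¹)}⟩⟨ψ_B^{-B(B+2⁻¹)}|`. -/
def Sop (p : ℕ) [NeZero p] : Matrix (ZMod p) (ZMod p) ℂ :=
  ∑ B : ZMod p, proj p (psi p B (-B * (B + (2 : ZMod p)⁻¹)))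

/-!
The cubic term `a k³` is common to both states, so it cancels in `⟨f_{a,b,c}|f_{a,b',c'}⟩`,
leaving `p⁻¹ Σ_k ω^{(b'-b)k² + (c'-c)k}`. For `b = b'` this is a linear character sum, equal to
`p` or `0`. For `b ≠ b'` it is a quadratic sum `S` with `|S|² = p`: substituting `x = y + m` in
`S · S̄ = Σ_{x,y} ω^{f(x) - f(y)}` turns the sum over `y` into a linear character sum, which
vanishes unless `m = 0`.
-/

namespace AddChar

theorem sum_mul_conj_sum {G ι : Type*} [AddCommGroup G] [Finite G] [Fintype ι]
    (ψ : AddChar G ℂ) (f : ι → G) :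
    (∑ x, ψ (f x)) * (starRingEnd ℂ) (∑ y, ψ (f y)) = ∑ y, ∑ x, ψ (f x - f y) := by
  rw [map_sum, sum_mul_sum, sum_comm]
  simp only [sub_eq_add_neg, map_add_eq_mul, map_neg_eq_conj]

theorem norm_sum_quadratic {F : Type*} [Field F] [Fintype F] {ψ : AddChar F ℂ}
    (hψ : ψ.IsPrimitive) (h2 : (2 : F) ≠ 0) {D : F} (hD : D ≠ 0) (E : F) :
    ‖∑ x, ψ (D * x ^ 2 + E * x)‖ = √(Fintype.card F) := by
  classical
  set f : F → F := fun x => D * x ^ 2 + E * x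
  have hshift (y m : F) : f (m + y) - f y = f m + y * (2 * D * m) := by simp only [f]; ring
  have hsq : (‖∑ x, ψ (f x)‖ ^ 2 : ℂ) = Fintype.card F :=
    calc (‖∑ x, ψ (f x)‖ ^ 2 : ℂ)
        = ∑ y, ∑ m, ψ (f (m + y) - f y) := by
          rw [← Complex.mul_conj', sum_mul_conj_sum]
          exact sum_congr rfl fun y _ =>
            (Equiv.sum_comp (Equiv.addRight y) fun x => ψ (f x - f y)).symm
      _ = ∑ m, ψ (f m) * ∑ y, ψ (y * (2 * D * m)) := by
          rw [sum_comm]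
          simp only [hshift, map_add_eq_mul, mul_sum]
      _ = Fintype.card F := by simp [sum_mulShift _ hψ, h2, hD, f]
  rw [← Real.sqrt_sq (norm_nonneg _)]
  exact congrArg Real.sqrt (mod_cast hsq)

end AddChar

theorem chi_eq_stdAddChar (p : ℕ) [NeZero p] (x : ZMod p) : chi p x = ZMod.stdAddChar x := by
  rw [ZMod.stdAddChar_apply, ZMod.toCircle_apply, chi]

section Inner

variable (p : ℕ) [NeZero p]

theorem inner_magic (a b c b' c' : ZMod p) :
    ∑ k, (starRingEnd ℂ) (magic p a b c k) * magic p a b' c' k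
      = (p : ℂ)⁻¹ * ∑ k, ZMod.stdAddChar ((b' - b) * k ^ 2 + (c' - c) * k) := by
  have hsqrt : ((√p : ℝ) : ℂ) * ((√p : ℝ) : ℂ) = p := by
    rw [← Complex.ofReal_mul, Real.mul_self_sqrt p.cast_nonneg, Complex.ofReal_natCast]
  rw [mul_sum]
  refine sum_congr rfl fun k _ => ?_
  have hchar : (starRingEnd ℂ) (chi p (a * k ^ 3 + b * k ^ 2 + c * k)) *
      chi p (a * k ^ 3 + b' * k ^ 2 + c' * k)
        = ZMod.stdAddChar ((b' - b) * k ^ 2 + (c' - c) * k) := by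
    rw [chi_eq_stdAddChar, chi_eq_stdAddChar, ← AddChar.map_neg_eq_conj,
      ← AddChar.map_add_eq_mul]
    congr 1
    ring
  simp only [magic, map_mul, map_inv₀, Complex.conj_ofReal, ← hchar, ← hsqrt, mul_inv]
  ring

theorem norm_inner_magic_of_eq (a b c c' : ZMod p) :
    ‖∑ k, (starRingEnd ℂ) (magic p a b c k) * magic p a b c' k‖ = if c = c' then 1 else 0 := by
  have hp : (p : ℂ) ≠ 0 := Nat.cast_ne_zero.mpr (NeZero.ne p)
  simp only [inner_magic, sub_self, zero_mul, zero_add, mul_comm (c' - c),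
    AddChar.sum_mulShift _ (ZMod.isPrimitive_stdAddChar p), sub_eq_zero, eq_comm (a := c'),
    ZMod.card]
  split_ifs <;> simp [hp]

end Inner

theorem norm_inner_magic_of_ne (p : ℕ) [Fact p.Prime] (hp3 : 3 < p) (a : ZMod p) {b b' : ZMod p}
    (hb : b ≠ b') (c c' : ZMod p) :
    ‖∑ k, (starRingEnd ℂ) (magic p a b c k) * magic p a b' c' k‖ = 1 / √p := by
  have h2 : (2 : ZMod p) ≠ 0 := Ring.two_ne_zero (by rw [ZMod.ringChar_zmod_n]; omega)
  rw [inner_magic, norm_mul, AddChar.norm_sum_quadratic (ZMod.isPrimitive_stdAddChar p) h2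
    (sub_ne_zero.mpr hb.symm), ZMod.card, norm_inv, Complex.norm_natCast, inv_mul_eq_div,
    Real.sqrt_div_self']

theorem stmt3_general (p : ℕ) [Fact p.Prime] (hp3 : 3 < p) (a : ZMod p)
    (b c b' c' : ZMod p) :
    (b = b' → c = c' →
      ‖∑ k : ZMod p, (starRingEnd ℂ) (magic p a b c k) * magic p a b' c' k‖ = 1) ∧
    (b = b' → c ≠ c' →
      ‖∑ k : ZMod p, (starRingEnd ℂ) (magic p a b c k) * magic p a b' c' k‖ = 0) ∧
    (b ≠ b' →
      ‖∑ k : ZMod p, (starRingEnd ℂ) (magic p a b c k) * magic p a b' c' k‖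
        = 1 / Real.sqrt p) := by
  refine ⟨?_, ?_, fun hb => norm_inner_magic_of_ne p hp3 a hb c c'⟩
  · rintro rfl rfl
    simp [norm_inner_magic_of_eq]
  · rintro rfl hc
    simp [norm_inner_magic_of_eq, hc]

theorem stmt3 (p : ℕ) [Fact p.Prime] (hp3 : 3 < p) (a : ZMod p) (ha : a ≠ 0)
    (b c b' c' : ZMod p) :
    (b = b' → c = c' →
      ‖∑ k : ZMod p, (starRingEnd ℂ) (magic p a b c k) * magic p a b' c' k‖ = 1) ∧
    (b = b' → c ≠ c' →
      ‖∑ k : ZMod p, (starRingEnd ℂ) (magic p a b c k) * magic p a b' c' k‖ = 0) ∧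
    (b ≠ b' →
      ‖∑ k : ZMod p, (starRingEnd ℂ) (magic p a b c k) * magic p a b' c' k‖
        = 1 / Real.sqrt p) :=
  stmt3_general p hp3 a b c b' c'
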